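/- arXiv:2510.20226 — 2 statements merged into one kernel-verified Lean document; each statement's English description precedes it below -/
import Mathlib

section
/- In a strongly connected digraph D with the sum metric, every eccentric vertex and every contour vertex is a boundary vertex; that is, Ecc(D) ∪ Ct(D) ⊆ ∂(D). -/
variable {V : Type*}

/-- There is a directed walk of length `n` from `u` to `v`. -/
def DWalkLen (E : V → V → Prop) (u v : V) (n : ℕ) : Prop :=
  ∃ f : Fin (n + 1) → V, f 0 = u ∧ f (Fin.last n) = v ∧
    ∀ i : Fin n, E (f i.castSucc) (f i.succ)

/-- A digraph is strongly connected if every vertex reaches every other by a directed walk. -/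
def StronglyConnected (E : V → V → Prop) : Prop :=
  ∀ u v : V, ∃ n, DWalkLen E u v n

/-- Directed distance: length of a shortest directed walk. -/
noncomputable def ddist (E : V → V → Prop) (u v : V) : ℕ :=
  sInf {n | DWalkLen E u v n}

/-- Sum distance. -/
noncomputable def sd (E : V → V → Prop) (u v : V) : ℕ :=
  ddist E u v + ddist E v u

/-- Eccentricity with respect to the sum distance. -/
noncomputable def decc (E : V → V → Prop) [Fintype V] (u : V) : ℕ :=
  Finset.univ.sup (fun v => sd E u v)

/-- Radius: minimum eccentricity. -/
noncomputable def drad (E : V → V → Prop) [Fintype V] : ℕ :=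
  sInf (Set.range (decc E))

/-- Diameter: maximum eccentricity. -/
noncomputable def ddiam (E : V → V → Prop) [Fintype V] : ℕ :=
  Finset.univ.sup (decc E)

/-- `w` is a neighbour of `v` (edge in either direction). -/
def dnbr (E : V → V → Prop) (v w : V) : Prop := E v w ∨ E w v

/-- Peripheral vertices. -/
def PerSet (E : V → V → Prop) [Fintype V] : Set V := {v | decc E v = ddiam E}

/-- Eccentric vertices. -/
def EccSet (E : V → V → Prop) [Fintype V] : Set V := {v | ∃ u, sd E u v = decc E u}

/-- Contour vertices. -/
def CtSet (E : V → V → Prop) [Fintype V] : Set V :=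
  {v | ∀ u, dnbr E v u → decc E u ≤ decc E v}

/-- Boundary vertices. -/
def BdSet (E : V → V → Prop) : Set V :=
  {v | ∃ u, ∀ w, dnbr E v w → sd E u w ≤ sd E u v}

/-- Central vertices. -/
def CenterSet (E : V → V → Prop) [Fintype V] : Set V := {v | decc E v = drad E}

/-- Corona product of digraphs: attach a copy of `H` to each vertex of `D`
via bidirectional edges. -/
def dcorona {α β : Type*} (E : α → α → Prop) (F : β → β → Prop) :
    (α ⊕ α × β) → (α ⊕ α × β) → Prop
  | .inl a, .inl a' => E a a'
  | .inl a, .inr p => a = p.1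
  | .inr p, .inl a => p.1 = a
  | .inr p, .inr q => p.1 = q.1 ∧ F p.2 q.2

/-!
An eccentric vertex `v` of `u` is at maximal distance from `u`, so no neighbour of `v` is farther
from `u`. For a contour vertex `v`, take `u` at maximal distance from `v`; since the sum distance is
symmetric, every neighbour `w` of `v` satisfies `d(u,w) ≤ ecc(w) ≤ ecc(v) = d(u,v)`.
-/

section SumDistance

variable {V : Type*} (E : V → V → Prop)

theorem sd_comm (u v : V) : sd E u v = sd E v u :=
  Nat.add_comm _ _

variable [Fintype V]

theorem sd_le_decc (u v : V) : sd E u v ≤ decc E u :=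
  Finset.le_sup (Finset.mem_univ v)

theorem exists_sd_eq_decc (v : V) : ∃ u, sd E v u = decc E v := by
  obtain ⟨u, -, hu⟩ := Finset.exists_mem_eq_sup Finset.univ ⟨v, Finset.mem_univ v⟩ (sd E v)
  exact ⟨u, hu.symm⟩

theorem eccSet_subset_bdSet : EccSet E ⊆ BdSet E := by
  rintro v ⟨u, hu⟩
  exact ⟨u, fun w _ => hu ▸ sd_le_decc E u w⟩

theorem ctSet_subset_bdSet : CtSet E ⊆ BdSet E := by
  intro v hv
  obtain ⟨u, hu⟩ := exists_sd_eq_decc E v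
  refine ⟨u, fun w hw => ?_⟩
  calc sd E u w = sd E w u := sd_comm E u w
    _ ≤ decc E w := sd_le_decc E w u
    _ ≤ decc E v := hv w hw
    _ = sd E u v := by rw [← hu, sd_comm]

end SumDistance

theorem ecc_union_ct_subset_boundary_general {V : Type*} [Fintype V] (E : V → V → Prop) :
    EccSet E ∪ CtSet E ⊆ BdSet E :=
  Set.union_subset (eccSet_subset_bdSet E) (ctSet_subset_bdSet E)

theorem ecc_union_ct_subset_boundary {V : Type*} [Fintype V] (E : V → V → Prop)
    (hD : StronglyConnected E) :
    EccSet E ∪ CtSet E ⊆ BdSet E :=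
  ecc_union_ct_subset_boundary_general E
end

section
/- Let D and H be strongly connected digraphs with |V(H)| ≥ 2, and form the corona product D ⊙ H by attaching a copy H_i of H to each vertex u_i of D via bidirectional edges. With respect to the sum metric, the distance between two vertices u_i, u_j of D in D ⊙ H equals sd_D(u_i, u_j), and the distance from u_i to a vertex v_s^j of H_j equals sd_D(u_i, u_j) + 2. -/
variable {V : Type*}

/-! Shortest walks of `D`, lifted to `D ⊙ H` and extended by a connecting edge, give the upper
bounds. For the lower bounds, take the `D`-distance from `i` of a vertex's projection to `D`, plus
one on the copies of `H`: it grows by at most one along each edge of `D ⊙ H`, so it bounds the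
distance from `inl i`. Symmetrically, the `D`-distance to `i`, plus one on the copies of `H`,
bounds the distance to `inl i`. -/

namespace DWalkLen

variable {W : Type*} {E : V → V → Prop} {u v w : V} {n m : ℕ}

lemma zero_iff : DWalkLen E u v 0 ↔ u = v := by
  constructor
  · rintro ⟨f, h0, hl, _⟩
    rw [← h0, ← hl, Subsingleton.elim (0 : Fin 1) (Fin.last 0)]
  · rintro rfl
    exact ⟨fun _ => u, rfl, rfl, fun i => i.elim0⟩

lemma refl (u : V) : DWalkLen E u u 0 := zero_iff.mpr rfl

lemma succ_iff : DWalkLen E u v (n + 1) ↔ ∃ w, E u w ∧ DWalkLen E w v n := by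
  constructor
  · rintro ⟨f, h0, hl, he⟩
    refine ⟨f 1, h0 ▸ he 0, fun i => f i.succ, rfl, ?_, fun i => ?_⟩
    · simpa only [Fin.succ_last] using hl
    · simpa only [Fin.succ_castSucc] using he i.succ
  · rintro ⟨w, hw, g, h0, hl, he⟩
    refine ⟨Fin.cases u g, rfl, by simpa only [← Fin.succ_last, Fin.cases_succ] using hl, ?_⟩
    intro i
    induction i using Fin.cases with
    | zero => exact show E u (g 0) from h0 ▸ hw
    | succ j => exact he j

lemma cons (huw : E u w) (h : DWalkLen E w v n) : DWalkLen E u v (n + 1) :=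
  succ_iff.mpr ⟨w, huw, h⟩

lemma single (h : E u v) : DWalkLen E u v 1 := cons h (refl v)

lemma append (h₁ : DWalkLen E u v n) (h₂ : DWalkLen E v w m) : DWalkLen E u w (n + m) := by
  induction n generalizing u with
  | zero => rwa [zero_iff.mp h₁, Nat.zero_add]
  | succ k ih =>
    obtain ⟨x, hux, hx⟩ := succ_iff.mp h₁
    rw [Nat.add_right_comm]
    exact cons hux (ih hx)

lemma map {E' : W → W → Prop} (f : V → W) (hf : ∀ a b, E a b → E' (f a) (f b))
    (h : DWalkLen E u v n) : DWalkLen E' (f u) (f v) n :=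
  let ⟨g, h0, hl, he⟩ := h
  ⟨f ∘ g, congrArg f h0, congrArg f hl, fun i => hf _ _ (he i)⟩

lemma apply_le_apply_add {φ : V → ℕ} (hφ : ∀ a b, E a b → φ b ≤ φ a + 1)
    (h : DWalkLen E u v n) : φ v ≤ φ u + n := by
  induction n generalizing u with
  | zero => simp [zero_iff.mp h]
  | succ k ih =>
    obtain ⟨x, hux, hx⟩ := succ_iff.mp h
    have := hφ u x hux
    have := ih hx
    omega

lemma apply_le_apply_add' {φ : V → ℕ} (hφ : ∀ a b, E a b → φ a ≤ φ b + 1)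
    (h : DWalkLen E u v n) : φ u ≤ φ v + n := by
  induction n generalizing u with
  | zero => simp [zero_iff.mp h]
  | succ k ih =>
    obtain ⟨x, hux, hx⟩ := succ_iff.mp h
    have := hφ u x hux
    have := ih hx
    omega

lemma ddist_le (h : DWalkLen E u v n) : ddist E u v ≤ n := Nat.sInf_le h

lemma of_ddist (h : DWalkLen E u v n) : DWalkLen E u v (ddist E u v) :=
  Nat.sInf_mem (s := {n | DWalkLen E u v n}) ⟨n, h⟩

end DWalkLen

section ddist

variable {E : V → V → Prop} {v w : V}

@[simp]
lemma ddist_self (u : V) : ddist E u u = 0 :=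
  Nat.le_zero.mp (DWalkLen.refl u).ddist_le

lemma StronglyConnected.dwalkLen_ddist (hE : StronglyConnected E) (u v : V) :
    DWalkLen E u v (ddist E u v) :=
  Nat.sInf_mem (hE u v)

lemma StronglyConnected.ddist_le_ddist_add_one_of_adj_right (hE : StronglyConnected E) (u : V)
    (h : E v w) : ddist E u w ≤ ddist E u v + 1 :=
  ((hE.dwalkLen_ddist u v).append (.single h)).ddist_le

lemma StronglyConnected.ddist_le_ddist_add_one_of_adj_left (hE : StronglyConnected E) (u : V)
    (h : E v w) : ddist E v u ≤ ddist E w u + 1 := by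
  rw [Nat.add_comm]
  exact ((DWalkLen.single h).append (hE.dwalkLen_ddist w u)).ddist_le

end ddist

section dcorona

variable {α β : Type*} {E : α → α → Prop} {F : β → β → Prop}

lemma DWalkLen.dcorona_inl {i j : α} {n : ℕ} (h : DWalkLen E i j n) :
    DWalkLen (dcorona E F) (.inl i) (.inl j) n :=
  h.map Sum.inl fun _ _ hab => hab

lemma dcorona_inl_inr (i : α) (s : β) : dcorona E F (.inl i) (.inr (i, s)) := rfl

lemma dcorona_inr_inl (i : α) (s : β) : dcorona E F (.inr (i, s)) (.inl i) := rfl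

variable (E) in
noncomputable def dcoronaDistFrom (i : α) : α ⊕ α × β → ℕ :=
  Sum.elim (ddist E i) fun p => ddist E i p.1 + 1

variable (E) in
noncomputable def dcoronaDistTo (i : α) : α ⊕ α × β → ℕ :=
  Sum.elim (ddist E · i) fun p => ddist E p.1 i + 1

lemma StronglyConnected.dcoronaDistFrom_le_add_one (hE : StronglyConnected E) (i : α)
    (x y : α ⊕ α × β) (hxy : dcorona E F x y) :
    dcoronaDistFrom E i y ≤ dcoronaDistFrom E i x + 1 := by
  rcases x with a | ⟨a, s⟩ <;> rcases y with b | ⟨b, t⟩ <;> simp only [dcorona] at hxy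
  · exact hE.ddist_le_ddist_add_one_of_adj_right i hxy
  all_goals simp only [dcoronaDistFrom, Sum.elim_inl, Sum.elim_inr]; grind

lemma StronglyConnected.dcoronaDistTo_le_add_one (hE : StronglyConnected E) (i : α)
    (x y : α ⊕ α × β) (hxy : dcorona E F x y) :
    dcoronaDistTo E i x ≤ dcoronaDistTo E i y + 1 := by
  rcases x with a | ⟨a, s⟩ <;> rcases y with b | ⟨b, t⟩ <;> simp only [dcorona] at hxy
  · exact hE.ddist_le_ddist_add_one_of_adj_left i hxy
  all_goals simp only [dcoronaDistTo, Sum.elim_inl, Sum.elim_inr]; grind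

lemma StronglyConnected.ddist_dcorona_inl_inl (hE : StronglyConnected E) (i j : α) :
    ddist (dcorona E F) (.inl i) (.inl j) = ddist E i j := by
  have hw := (hE.dwalkLen_ddist i j).dcorona_inl (F := F)
  refine le_antisymm hw.ddist_le ?_
  simpa [dcoronaDistFrom] using hw.of_ddist.apply_le_apply_add (hE.dcoronaDistFrom_le_add_one i)

lemma StronglyConnected.ddist_dcorona_inl_inr (hE : StronglyConnected E) (i j : α) (s : β) :
    ddist (dcorona E F) (.inl i) (.inr (j, s)) = ddist E i j + 1 := by
  have hw := (hE.dwalkLen_ddist i j).dcorona_inl (F := F) |>.append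
    (.single (dcorona_inl_inr j s))
  refine le_antisymm hw.ddist_le ?_
  simpa [dcoronaDistFrom] using hw.of_ddist.apply_le_apply_add (hE.dcoronaDistFrom_le_add_one i)

lemma StronglyConnected.ddist_dcorona_inr_inl (hE : StronglyConnected E) (i j : α) (s : β) :
    ddist (dcorona E F) (.inr (j, s)) (.inl i) = ddist E j i + 1 := by
  have hw := DWalkLen.cons (dcorona_inr_inl j s) ((hE.dwalkLen_ddist j i).dcorona_inl (F := F))
  refine le_antisymm hw.ddist_le ?_
  simpa [dcoronaDistTo] using hw.of_ddist.apply_le_apply_add' (hE.dcoronaDistTo_le_add_one i)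

end dcorona

theorem dcorona_sd_inl_general {α β : Type*} (E : α → α → Prop) (F : β → β → Prop)
    (hD : StronglyConnected E) :
    (∀ i j : α, sd (dcorona E F) (Sum.inl i) (Sum.inl j) = sd E i j) ∧
    (∀ (i j : α) (s : β),
      sd (dcorona E F) (Sum.inl i) (Sum.inr (j, s)) = sd E i j + 2) := by
  refine ⟨fun i j => ?_, fun i j s => ?_⟩
  · simp only [sd, hD.ddist_dcorona_inl_inl]
  · simp only [sd, hD.ddist_dcorona_inl_inr, hD.ddist_dcorona_inr_inl]
    omega

theorem dcorona_sd_inl {α β : Type*} [Fintype β] (E : α → α → Prop) (F : β → β → Prop)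
    (hD : StronglyConnected E) (hH : StronglyConnected F)
    (hβ : 2 ≤ Fintype.card β) :
    (∀ i j : α, sd (dcorona E F) (Sum.inl i) (Sum.inl j) = sd E i j) ∧
    (∀ (i j : α) (s : β),
      sd (dcorona E F) (Sum.inl i) (Sum.inr (j, s)) = sd E i j + 2) :=
  dcorona_sd_inl_general E F hD
end
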